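/- Let 𝕋 = {z ∈ ℂ : |z| = 1} with its normalized Haar (arc-length) probability measure μ, and let m : 𝕋 → ℂ be an essentially bounded measurable function with |m(z)|² + |m(−z)|² = 2 for μ-almost every z ∈ 𝕋. Then the operator S_m on L²(𝕋, μ) defined by (S_m ξ)(z) = m(z)·ξ(z²) is a well-defined linear isometry. -/

import Mathlib

open MeasureTheory ComplexConjugate

/-- The normalized Haar (arc-length) probability measure on the unit circle
`𝕋 = {z ∈ ℂ : |z| = 1}`, realized as a measure on `ℂ`: the pushforward of Lebesgue
measure on `(0, 1]` under `t ↦ e^{2πit}`. -/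
noncomputable def haarCircle : Measure ℂ :=
  Measure.map (fun t : ℝ => Complex.exp (2 * Real.pi * Complex.I * t))
    (volume.restrict (Set.Ioc (0 : ℝ) 1))

/-!
`haarCircle` is the image of Haar measure on `ℝ/ℤ` under `t ↦ e^{2πit}`, which turns
`z ↦ -z` and `z ↦ z²` into `t ↦ t + 1/2` and `t ↦ 2t`; both therefore preserve `μ`. As `z²`
does not change under `z ↦ -z`, averaging `∫ |m(z)|² |ξ(z²)|² dμ` with its image under this
symmetry replaces `|m(z)|²` by `(|m(z)|² + |m(-z)|²) / 2 = 1`, leaving `∫ |ξ(z²)|² dμ = ∫ |ξ|² dμ`.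
The same identity bounds `|m|² ≤ 2`, so `m ∈ L^∞` and `S_m` is multiplication by `m` after
composition with `z ↦ z²`, a linear map on `L²`.
-/

open AddCircle
open scoped ENNReal

theorem measurePreserving_toCircle_haarCircle :
    MeasurePreserving (fun x : AddCircle (1 : ℝ) => (toCircle x : ℂ)) volume haarCircle := by
  refine ⟨by fun_prop, ?_⟩
  rw [← (AddCircle.measurePreserving_mk 1 0).map_eq, zero_add,
    Measure.map_map (by fun_prop) (by fun_prop)]
  congr 1
  funext t
  simp only [Function.comp_apply, toCircle_apply_mk, div_one, Circle.coe_exp,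
    Complex.ofReal_mul, Complex.ofReal_ofNat]
  ring_nf

theorem measurePreserving_neg_haarCircle :
    MeasurePreserving (fun z : ℂ => -z) haarCircle haarCircle :=
  measurePreserving_toCircle_haarCircle.of_semiconj
    (measurePreserving_add_right volume ((1 / 2 : ℝ) : AddCircle (1 : ℝ)))
    (fun x => by
      simp only [toCircle_add, Circle.coe_mul, toCircle_apply_mk, Circle.coe_exp]
      rw [show 2 * Real.pi / 1 * (1 / 2) = Real.pi by ring, Complex.exp_pi_mul_I, mul_neg_one])
    measurable_neg

theorem measurePreserving_sq_haarCircle :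
    MeasurePreserving (fun z : ℂ => z ^ 2) haarCircle haarCircle :=
  measurePreserving_toCircle_haarCircle.of_semiconj (ergodic_nsmul one_lt_two).toMeasurePreserving
    (fun x => by simp [toCircle_nsmul]) (by fun_prop)

section WeightedComposition

variable {α : Type*} [MeasurableSpace α] {μ : Measure α} {σ T : α → α}

theorem lintegral_mul_comp_eq_of_add_comp_eq_two (hσ : MeasurePreserving σ μ μ)
    (hT : MeasurePreserving T μ μ) (hTσ : ∀ x, T (σ x) = T x) {w F : α → ℝ≥0∞}
    (hw : Measurable w) (hF : Measurable F) (hwσ : ∀ᵐ x ∂μ, w x + w (σ x) = 2) :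
    ∫⁻ x, w x * F (T x) ∂μ = ∫⁻ x, F x ∂μ := by
  have hFT : Measurable fun x => F (T x) := hF.comp hT.measurable
  have h_swap : ∫⁻ x, w (σ x) * F (T x) ∂μ = ∫⁻ x, w x * F (T x) ∂μ := by
    simpa only [hTσ] using hσ.lintegral_comp (f := fun x => w x * F (T x)) (hw.mul hFT)
  refine (ENNReal.mul_right_inj two_ne_zero ENNReal.ofNat_ne_top).mp ?_
  calc 2 * ∫⁻ x, w x * F (T x) ∂μ
      = ∫⁻ x, (w x + w (σ x)) * F (T x) ∂μ := by
        simp_rw [add_mul]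
        rw [lintegral_add_left (f := fun x => w x * F (T x)) (hw.mul hFT), h_swap, two_mul]
    _ = ∫⁻ x, 2 * F (T x) ∂μ := lintegral_congr_ae (hwσ.mono fun x hx => by simp only [hx])
    _ = 2 * ∫⁻ x, F x ∂μ := by rw [lintegral_const_mul 2 hFT, hT.lintegral_comp hF]

variable {𝕜 E : Type*} [NontriviallyNormedField 𝕜] [NormedAddCommGroup E] [NormedSpace 𝕜 E]
  {p : ℝ≥0∞}

theorem eLpNorm_smul_comp_eq (hσ : MeasurePreserving σ μ μ) (hT : MeasurePreserving T μ μ)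
    (hTσ : ∀ x, T (σ x) = T x) (hp0 : p ≠ 0) (hp : p ≠ ∞) {m : α → 𝕜} {f : α → E}
    (hm : StronglyMeasurable m) (hf : StronglyMeasurable f)
    (hmσ : ∀ᵐ x ∂μ, ‖m x‖ ^ p.toReal + ‖m (σ x)‖ ^ p.toReal = 2) :
    eLpNorm (fun x => m x • f (T x)) p μ = eLpNorm f p μ := by
  simp only [eLpNorm_eq_lintegral_rpow_enorm_toReal hp0 hp, enorm_smul,
    ENNReal.mul_rpow_of_nonneg _ _ ENNReal.toReal_nonneg]
  congr 1
  refine lintegral_mul_comp_eq_of_add_comp_eq_two hσ hT hTσ (hm.enorm.pow_const _)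
    (hf.enorm.pow_const _) (hmσ.mono fun x hx => ?_)
  rw [← ofReal_norm, ← ofReal_norm,
    ENNReal.ofReal_rpow_of_nonneg (norm_nonneg _) ENNReal.toReal_nonneg,
    ENNReal.ofReal_rpow_of_nonneg (norm_nonneg _) ENNReal.toReal_nonneg,
    ← ENNReal.ofReal_add (by positivity) (by positivity), hx, ENNReal.ofReal_ofNat]

variable (E p) in
noncomputable def weightedCompositionₗ (w : Lp 𝕜 ∞ μ) (hT : MeasurePreserving T μ μ) :
    Lp E p μ →ₗ[𝕜] Lp E p μ :=
  (ContinuousLinearMap.lsmul 𝕜 𝕜).holderₗ μ ∞ p p w ∘ₗ Lp.compMeasurePreservingₗ 𝕜 T hT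

theorem coeFn_weightedCompositionₗ (w : Lp 𝕜 ∞ μ) (hT : MeasurePreserving T μ μ)
    (ξ : Lp E p μ) :
    weightedCompositionₗ E p w hT ξ =ᵐ[μ] fun x => w x • ξ (T x) := by
  filter_upwards [ContinuousLinearMap.coeFn_holder (r := p) (ContinuousLinearMap.lsmul 𝕜 𝕜) w
      (Lp.compMeasurePreserving T hT ξ), Lp.coeFn_compMeasurePreserving ξ hT] with x hx hξ
  exact hx.trans (by rw [hξ]; rfl)

theorem norm_weightedCompositionₗ (hσ : MeasurePreserving σ μ μ) (hT : MeasurePreserving T μ μ)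
    (hTσ : ∀ x, T (σ x) = T x) (hp0 : p ≠ 0) (hp : p ≠ ∞) (w : Lp 𝕜 ∞ μ)
    (hwσ : ∀ᵐ x ∂μ, ‖w x‖ ^ p.toReal + ‖w (σ x)‖ ^ p.toReal = 2) (ξ : Lp E p μ) :
    ‖weightedCompositionₗ E p w hT ξ‖ = ‖ξ‖ := by
  rw [Lp.norm_def, Lp.norm_def, eLpNorm_congr_ae (coeFn_weightedCompositionₗ w hT ξ),
    eLpNorm_smul_comp_eq hσ hT hTσ hp0 hp (Lp.stronglyMeasurable w) (Lp.stronglyMeasurable ξ) hwσ]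

end WeightedComposition

theorem stmt7 (m : ℂ → ℂ) (hmeas : Measurable m)
    (hfil : ∀ᵐ z ∂haarCircle,
      ‖m z‖ ^ 2 + ‖m (-z)‖ ^ 2 = 2) :
    ∃ S : Lp ℂ 2 haarCircle →ₗ[ℂ] Lp ℂ 2 haarCircle,
      (∀ ξ : Lp ℂ 2 haarCircle,
        ⇑(S ξ) =ᵐ[haarCircle] fun z => m z * ξ (z ^ 2)) ∧
      (∀ ξ : Lp ℂ 2 haarCircle, ‖S ξ‖ = ‖ξ‖) := by
  have hm_bdd : ∀ᵐ z ∂haarCircle, ‖m z‖ ≤ √2 :=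
    hfil.mono fun z hz => Real.le_sqrt_of_sq_le (by nlinarith [sq_nonneg ‖m (-z)‖])
  have hm_top : MemLp m ∞ haarCircle := memLp_top_of_bound hmeas.aestronglyMeasurable _ hm_bdd
  set w : Lp ℂ ∞ haarCircle := hm_top.toLp m
  have hw : w =ᵐ[haarCircle] m := hm_top.coeFn_toLp
  refine ⟨weightedCompositionₗ ℂ 2 w measurePreserving_sq_haarCircle, fun ξ => ?_,
    norm_weightedCompositionₗ measurePreserving_neg_haarCircle measurePreserving_sq_haarCircle
      (fun z => neg_sq z) two_ne_zero ENNReal.ofNat_ne_top w ?_⟩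
  · filter_upwards [coeFn_weightedCompositionₗ w measurePreserving_sq_haarCircle ξ, hw]
      with z hz hwz
    rw [hz, hwz, smul_eq_mul]
  · filter_upwards [hw, measurePreserving_neg_haarCircle.quasiMeasurePreserving.ae_eq_comp hw,
      hfil] with z hwz hwz' hz
    simp only [Function.comp_apply] at hwz'
    simpa [hwz, hwz'] using hz
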